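/- arXiv:2301.07458 — 2 statements merged into one kernel-verified Lean document; each statement's English description precedes it below -/
import Mathlib

section
/- (Steiner's problem, acute case) Let A, B, C ∈ ℝ² be the vertices of a triangle all of whose interior angles are strictly less than 2π/3. Then there exists a unique point P ∈ ℝ² minimizing |AP| + |BP| + |CP|, and at this point each of the three segments PA, PB, PC makes an angle of 2π/3 with the other two. -/
/-!
The sum of distances `f Q = |AQ| + |BQ| + |CQ|` is coercive, so it has a minimiser `P`. Write
`n_X` for the unit vector from `P` towards `X`. Away from the vertices, the derivative of `f` along
`u` is `-⟪n_A + n_B + n_C, u⟫`; at the vertex `A`, the one-sided derivative along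
`u = n_B + n_C` is `‖u‖ - ‖u‖²`, which is negative exactly when `∠ B A C < 2π/3`. Hence `P` is not a
vertex and `n_A + n_B + n_C = 0`, which forces the pairwise inner products to be `-1/2`, i.e. the
angles at `P` to be `2π/3`. For uniqueness, `Q ↦ Σ ⟪X - Q, n_X⟫` is then a minorant of `f` by
Cauchy–Schwarz that is constant, equal to `f P`; so a second minimiser `Q` has `P - Q` parallel to
both `n_A` and `n_B`, hence `Q = P`.
-/

open EuclideanGeometry Real
open scoped RealInnerProductSpace

theorem arccos_neg_one_half : arccos (-(1 / 2)) = 2 * π / 3 := by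
  rw [arccos_neg, ← cos_pi_div_three, arccos_cos (by positivity) (by linarith [pi_pos])]
  ring

theorem IsLocalMinOn.hasDerivWithinAt_Ici_nonneg {φ : ℝ → ℝ} {a d : ℝ}
    (h : IsLocalMinOn φ (Set.Ici a) a) (hφ : HasDerivWithinAt φ d (Set.Ici a) a) : 0 ≤ d := by
  have hcone : (1 : ℝ) ∈ posTangentConeAt (Set.Ici a) a :=
    mem_posTangentConeAt_of_segment_subset (by
      rw [segment_eq_Icc (by linarith)]; exact Set.Icc_subset_Ici_self)
  simpa using h.hasFDerivWithinAt_nonneg hφ.hasFDerivWithinAt hcone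

theorem exists_forall_sum_dist_le {α : Type*} [PseudoMetricSpace α] [ProperSpace α] (A B C : α) :
    ∃ P, ∀ Q, dist A P + dist B P + dist C P ≤ dist A Q + dist B Q + dist C Q := by
  have : Nonempty α := ⟨A⟩
  refine Continuous.exists_forall_le (by fun_prop) ?_
  refine Filter.tendsto_atTop_mono (fun Q => ?_) (tendsto_dist_left_cocompact_atTop A)
  linarith [dist_nonneg (x := B) (y := Q), dist_nonneg (x := C) (y := Q)]

section

variable {E : Type*} [NormedAddCommGroup E] [InnerProductSpace ℝ E]

noncomputable def unitDir (P X : E) : E := ‖X - P‖⁻¹ • (X - P)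

theorem norm_unitDir {P X : E} (h : X ≠ P) : ‖unitDir P X‖ = 1 := by
  rw [unitDir, norm_smul, norm_inv, norm_norm,
    inv_mul_cancel₀ (norm_ne_zero_iff.2 (sub_ne_zero.2 h))]

theorem inner_sub_unitDir (P X : E) : ⟪X - P, unitDir P X⟫ = ‖X - P‖ := by
  rw [unitDir, real_inner_smul_right, real_inner_self_eq_norm_sq]
  rcases eq_or_ne ‖X - P‖ 0 with h | h
  · simp [h]
  · field_simp

theorem angle_eq_arccos_inner_unitDir {P X Y : E} (hX : X ≠ P) (hY : Y ≠ P) :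
    ∠ X P Y = arccos ⟪unitDir P X, unitDir P Y⟫ := by
  have hX' : 0 < ‖X - P‖⁻¹ := inv_pos.2 (norm_pos_iff.2 (sub_ne_zero.2 hX))
  have hY' : 0 < ‖Y - P‖⁻¹ := inv_pos.2 (norm_pos_iff.2 (sub_ne_zero.2 hY))
  rw [EuclideanGeometry.angle, vsub_eq_sub, vsub_eq_sub,
    ← InnerProductGeometry.angle_smul_left_of_pos _ _ hX',
    ← InnerProductGeometry.angle_smul_right_of_pos _ _ hY', InnerProductGeometry.angle,
    ← unitDir, ← unitDir, norm_unitDir hX, norm_unitDir hY, mul_one, div_one]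

theorem inner_eq_neg_one_half_of_add_add_eq_zero {a b c : E} (ha : ‖a‖ = 1) (hb : ‖b‖ = 1)
    (hc : ‖c‖ = 1) (h : a + b + c = 0) : ⟪a, b⟫ = -(1 / 2) := by
  have hab : ‖a + b‖ ^ 2 = 1 := by rw [eq_neg_of_add_eq_zero_left h, norm_neg, hc, one_pow]
  rw [norm_add_sq_real, ha, hb] at hab
  linarith

theorem hasDerivAt_dist_add_smul {P X : E} (h : X ≠ P) (u : E) :
    HasDerivAt (fun t : ℝ => dist X (P + t • u)) (-⟪unitDir P X, u⟫) 0 := by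
  have hne : ‖P - X‖ ≠ 0 := norm_ne_zero_iff.2 (sub_ne_zero.2 h.symm)
  have hline : HasDerivAt (fun t : ℝ => P + t • u - X) u 0 := by
    simpa using (((hasDerivAt_id (0 : ℝ)).smul_const u).const_add P).sub_const X
  have hsqrt := hline.norm_sq.sqrt (by simpa using hne)
  simp only [zero_smul, add_zero, sqrt_sq (norm_nonneg _)] at hsqrt
  convert hsqrt using 1
  · ext t
    rw [dist_comm, dist_eq_norm]
  · rw [unitDir, real_inner_smul_left, ← neg_sub P X, norm_neg, inner_neg_left]
    field_simp

theorem unitDir_add_add_eq_zero_of_forall_le {A B C P : E} (hA : A ≠ P) (hB : B ≠ P)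
    (hC : C ≠ P) (hP : ∀ Q, dist A P + dist B P + dist C P ≤ dist A Q + dist B Q + dist C Q) :
    unitDir P A + unitDir P B + unitDir P C = 0 := by
  set n := unitDir P A + unitDir P B + unitDir P C
  have hderiv : HasDerivAt
      (fun t : ℝ => dist A (P + t • n) + dist B (P + t • n) + dist C (P + t • n)) (-‖n‖ ^ 2) 0 := by
    refine (((hasDerivAt_dist_add_smul hA n).add (hasDerivAt_dist_add_smul hB n)).add
      (hasDerivAt_dist_add_smul hC n)).congr_deriv ?_
    rw [← real_inner_self_eq_norm_sq]
    simp only [n, inner_add_left]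
    ring
  have hmin : IsLocalMinOn
      (fun t : ℝ => dist A (P + t • n) + dist B (P + t • n) + dist C (P + t • n)) (Set.Ici 0) 0 :=
    IsMinOn.localize fun t _ => by simpa using hP (P + t • n)
  have := hmin.hasDerivWithinAt_Ici_nonneg hderiv.hasDerivWithinAt
  exact norm_eq_zero.1 (by nlinarith [norm_nonneg n])

theorem two_pi_div_three_le_angle_of_forall_le {A B C : E} (hB : B ≠ A) (hC : C ≠ A)
    (hA : ∀ Q, dist A A + dist B A + dist C A ≤ dist A Q + dist B Q + dist C Q) :
    2 * π / 3 ≤ ∠ B A C := by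
  set u := unitDir A B + unitDir A C
  -- `t * ‖u‖` stands in for `dist A (A + t • u)`: equal for `t ≥ 0`, and differentiable at `0`.
  have hderiv : HasDerivAt
      (fun t : ℝ => t * ‖u‖ + dist B (A + t • u) + dist C (A + t • u)) (‖u‖ - ‖u‖ ^ 2) 0 := by
    refine ((((hasDerivAt_id (0 : ℝ)).mul_const ‖u‖).add (hasDerivAt_dist_add_smul hB u)).add
      (hasDerivAt_dist_add_smul hC u)).congr_deriv ?_
    rw [← real_inner_self_eq_norm_sq]
    simp only [u, inner_add_right, inner_add_left, real_inner_comm (unitDir A B) (unitDir A C)]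
    ring
  have hmin : IsLocalMinOn
      (fun t : ℝ => t * ‖u‖ + dist B (A + t • u) + dist C (A + t • u)) (Set.Ici 0) 0 :=
    IsMinOn.localize fun t (ht : 0 ≤ t) => by
      have hdist : dist A (A + t • u) = t * ‖u‖ := by
        rw [dist_self_add_right, norm_smul, norm_of_nonneg ht]
      simpa [hdist] using hA (A + t • u)
  have hu : ‖u‖ ≤ 1 := by
    have := hmin.hasDerivWithinAt_Ici_nonneg hderiv.hasDerivWithinAt
    nlinarith [norm_nonneg u]
  have hinner : ⟪unitDir A B, unitDir A C⟫ ≤ -(1 / 2) := by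
    have := norm_add_sq_real (unitDir A B) (unitDir A C)
    rw [norm_unitDir hB, norm_unitDir hC] at this
    nlinarith [norm_nonneg u]
  rw [angle_eq_arccos_inner_unitDir hB hC, ← arccos_neg_one_half]
  exact arccos_le_arccos hinner

theorem angle_eq_two_pi_div_three_of_unitDir_add_add_eq_zero {P X Y Z : E} (hX : X ≠ P)
    (hY : Y ≠ P) (hZ : Z ≠ P) (h : unitDir P X + unitDir P Y + unitDir P Z = 0) :
    ∠ X P Y = 2 * π / 3 := by
  rw [angle_eq_arccos_inner_unitDir hX hY, inner_eq_neg_one_half_of_add_add_eq_zero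
    (norm_unitDir hX) (norm_unitDir hY) (norm_unitDir hZ) h, arccos_neg_one_half]

theorem inner_sub_unitDir_le_dist {P X : E} (hX : X ≠ P) (Q : E) :
    ⟪X - Q, unitDir P X⟫ ≤ dist X Q := by
  simpa [norm_unitDir hX, dist_eq_norm] using real_inner_le_norm (X - Q) (unitDir P X)

theorem sub_eq_smul_unitDir_of_inner_eq_dist {P X Q : E} (hX : X ≠ P)
    (h : ⟪X - Q, unitDir P X⟫ = dist X Q) : P - Q = (dist X Q - dist X P) • unitDir P X := by
  have hQ : X - Q = dist X Q • unitDir P X := by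
    have := inner_eq_norm_mul_iff_real.1 (by rw [h, norm_unitDir hX, mul_one, dist_eq_norm])
    rwa [norm_unitDir hX, one_smul, ← dist_eq_norm] at this
  have hP : X - P = dist X P • unitDir P X := by
    rw [unitDir, dist_eq_norm, smul_inv_smul₀ (norm_ne_zero_iff.2 (sub_ne_zero.2 hX))]
  rw [sub_smul, ← hQ, ← hP]
  abel

theorem sum_inner_sub_unitDir_eq {A B C P : E} (h : unitDir P A + unitDir P B + unitDir P C = 0)
    (Q : E) : ⟪A - Q, unitDir P A⟫ + ⟪B - Q, unitDir P B⟫ + ⟪C - Q, unitDir P C⟫ =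
      dist A P + dist B P + dist C P := by
  have hsplit (X : E) : ⟪X - Q, unitDir P X⟫ = dist X P + ⟪P - Q, unitDir P X⟫ := by
    rw [show X - Q = (X - P) + (P - Q) by abel, inner_add_left, inner_sub_unitDir, dist_eq_norm]
  have hzero : ⟪P - Q, unitDir P A⟫ + ⟪P - Q, unitDir P B⟫ + ⟪P - Q, unitDir P C⟫ = 0 := by
    rw [← inner_add_right, ← inner_add_right, h, inner_zero_right]
  rw [hsplit A, hsplit B, hsplit C]
  linarith

theorem eq_zero_of_smul_eq_smul_of_abs_inner_lt_one {a b : E} (ha : ‖a‖ = 1) (hb : ‖b‖ = 1)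
    (hab : |⟪a, b⟫| < 1) {r s : ℝ} (h : r • a = s • b) : r = 0 := by
  have hra : r = s * ⟪b, a⟫ := by
    simpa [real_inner_smul_left, real_inner_self_eq_norm_sq, ha] using congrArg (⟪·, a⟫) h
  have hsb : r * ⟪a, b⟫ = s := by
    simpa [real_inner_smul_left, real_inner_self_eq_norm_sq, hb] using congrArg (⟪·, b⟫) h
  rw [real_inner_comm] at hra
  have hsq : ⟪a, b⟫ ^ 2 < 1 := (sq_lt_one_iff_abs_lt_one _).2 hab
  have : r * (1 - ⟪a, b⟫ ^ 2) = 0 := by linear_combination hra - ⟪a, b⟫ * hsb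
  exact (mul_eq_zero.1 this).resolve_right (by linarith)

theorem eq_of_sum_dist_le_of_unitDir_add_add_eq_zero {A B C P Q : E} (hA : A ≠ P) (hB : B ≠ P)
    (hC : C ≠ P) (h : unitDir P A + unitDir P B + unitDir P C = 0)
    (hQ : dist A Q + dist B Q + dist C Q ≤ dist A P + dist B P + dist C P) : Q = P := by
  have hcal := sum_inner_sub_unitDir_eq h Q
  have hAQ := inner_sub_unitDir_le_dist hA Q
  have hBQ := inner_sub_unitDir_le_dist hB Q
  have hCQ := inner_sub_unitDir_le_dist hC Q
  have hPQA := sub_eq_smul_unitDir_of_inner_eq_dist hA (by linarith)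
  have hPQB := sub_eq_smul_unitDir_of_inner_eq_dist hB (by linarith)
  have hAB := inner_eq_neg_one_half_of_add_add_eq_zero (norm_unitDir hA) (norm_unitDir hB)
    (norm_unitDir hC) h
  have hr := eq_zero_of_smul_eq_smul_of_abs_inner_lt_one (norm_unitDir hA) (norm_unitDir hB)
    (by rw [hAB]; norm_num) (hPQA.symm.trans hPQB)
  rw [hr, zero_smul, sub_eq_zero] at hPQA
  exact hPQA.symm

end

theorem stmt12_steiner_acute (A B C : EuclideanSpace ℝ (Fin 2))
    (hABC : AffineIndependent ℝ ![A, B, C])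
    (hA : ∠ B A C < 2 * π / 3) (hB : ∠ A B C < 2 * π / 3)
    (hC : ∠ A C B < 2 * π / 3) :
    ∃ P : EuclideanSpace ℝ (Fin 2),
      (∀ Q : EuclideanSpace ℝ (Fin 2),
        dist A P + dist B P + dist C P ≤ dist A Q + dist B Q + dist C Q) ∧
      ∠ A P B = 2 * π / 3 ∧ ∠ B P C = 2 * π / 3 ∧ ∠ A P C = 2 * π / 3 ∧
      ∀ P' : EuclideanSpace ℝ (Fin 2),
        (∀ Q : EuclideanSpace ℝ (Fin 2),
          dist A P' + dist B P' + dist C P' ≤ dist A Q + dist B Q + dist C Q) →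
        P' = P := by
  have hAB : A ≠ B := hABC.injective.ne (by decide : (0 : Fin 3) ≠ 1)
  have hAC : A ≠ C := hABC.injective.ne (by decide : (0 : Fin 3) ≠ 2)
  have hBC : B ≠ C := hABC.injective.ne (by decide : (1 : Fin 3) ≠ 2)
  obtain ⟨P, hP⟩ := exists_forall_sum_dist_le A B C
  have hAP : A ≠ P := by
    rintro rfl
    exact hA.not_ge (two_pi_div_three_le_angle_of_forall_le hAB.symm hAC.symm hP)
  have hBP : B ≠ P := by
    rintro rfl
    exact hB.not_ge (two_pi_div_three_le_angle_of_forall_le hAB hBC.symm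
      fun Q => by linarith [hP Q])
  have hCP : C ≠ P := by
    rintro rfl
    exact hC.not_ge (two_pi_div_three_le_angle_of_forall_le hAC hBC fun Q => by linarith [hP Q])
  have hsum := unitDir_add_add_eq_zero_of_forall_le hAP hBP hCP hP
  refine ⟨P, hP, angle_eq_two_pi_div_three_of_unitDir_add_add_eq_zero hAP hBP hCP hsum,
    angle_eq_two_pi_div_three_of_unitDir_add_add_eq_zero hBP hCP hAP (by rw [← hsum]; abel),
    angle_eq_two_pi_div_three_of_unitDir_add_add_eq_zero hAP hCP hBP (by rw [← hsum]; abel),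
    fun P' hP' => eq_of_sum_dist_le_of_unitDir_add_add_eq_zero hAP hBP hCP hsum (hP' P)⟩
end

section
/- (Steiner's problem, obtuse case) Let A, B, C ∈ ℝ² with the interior angle at C greater than or equal to 2π/3. Then for every point P ∈ ℝ², |AP| + |BP| + |CP| ≥ |AC| + |BC|, i.e., P = C minimizes the sum of distances to A, B, C. -/
/-!
Put `C` at the origin and let `u`, `v` be the unit vectors pointing from `C` to `A` and to `B`.
An angle of at least `2π/3` means `⟪u, v⟫ ≤ -1/2`, i.e. `‖u + v‖ ≤ 1`. Projecting onto `u`, `v`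
and `u + v` then gives `|AP| ≥ |AC| - ⟪P, u⟫`, `|BP| ≥ |BC| - ⟪P, v⟫` and `|CP| ≥ ⟪P, u + v⟫`,
whose sum is the claim.
-/

open EuclideanGeometry Real
open scoped RealInnerProductSpace

variable {V : Type*} [NormedAddCommGroup V] [InnerProductSpace ℝ V]

theorem norm_add_norm_le_of_inner_eq_norm {a b p u v : V} (hu : ‖u‖ ≤ 1) (hv : ‖v‖ ≤ 1)
    (huv : ‖u + v‖ ≤ 1) (hau : ⟪a, u⟫ = ‖a‖) (hbv : ⟪b, v⟫ = ‖b‖) :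
    ‖a‖ + ‖b‖ ≤ ‖a - p‖ + ‖b - p‖ + ‖p‖ := by
  have hA : ⟪a - p, u⟫ ≤ ‖a - p‖ :=
    (real_inner_le_norm _ _).trans (mul_le_of_le_one_right (norm_nonneg _) hu)
  have hB : ⟪b - p, v⟫ ≤ ‖b - p‖ :=
    (real_inner_le_norm _ _).trans (mul_le_of_le_one_right (norm_nonneg _) hv)
  have hC : ⟪p, u + v⟫ ≤ ‖p‖ :=
    (real_inner_le_norm _ _).trans (mul_le_of_le_one_right (norm_nonneg _) huv)
  rw [inner_sub_left, hau] at hA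
  rw [inner_sub_left, hbv] at hB
  rw [inner_add_right] at hC
  linarith

theorem real_inner_inv_norm_smul_self (x : V) : ⟪x, ‖x‖⁻¹ • x⟫ = ‖x‖ := by
  rcases eq_or_ne x 0 with rfl | hx
  · simp
  · rw [real_inner_smul_right, real_inner_self_eq_norm_sq]
    field_simp

theorem norm_inv_norm_smul_le_one (x : V) : ‖‖x‖⁻¹ • x‖ ≤ 1 :=
  mem_closedBall_zero_iff.mp (inv_norm_smul_mem_unitClosedBall x)

theorem cos_le_neg_half_of_two_pi_div_three_le {θ : ℝ} (h : 2 * π / 3 ≤ θ) (hθ : θ ≤ π) :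
    cos θ ≤ -(1 / 2) :=
  calc cos θ ≤ cos (π - π / 3) :=
        cos_le_cos_of_nonneg_of_le_pi (by linarith [pi_pos]) hθ (by linarith)
    _ = -(1 / 2) := by rw [cos_pi_sub, cos_pi_div_three]

theorem norm_inv_norm_smul_add_le_one {x y : V}
    (h : 2 * π / 3 ≤ InnerProductGeometry.angle x y) :
    ‖‖x‖⁻¹ • x + ‖y‖⁻¹ • y‖ ≤ 1 := by
  have hx : x ≠ 0 := by
    rintro rfl
    rw [InnerProductGeometry.angle_zero_left] at h
    linarith [pi_pos]
  have hy : y ≠ 0 := by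
    rintro rfl
    rw [InnerProductGeometry.angle_zero_right] at h
    linarith [pi_pos]
  have hux : ‖‖x‖⁻¹ • x‖ = 1 := by simp [norm_smul, hx]
  have huy : ‖‖y‖⁻¹ • y‖ = 1 := by simp [norm_smul, hy]
  have hcos : ⟪‖x‖⁻¹ • x, ‖y‖⁻¹ • y⟫ = cos (InnerProductGeometry.angle x y) := by
    rw [InnerProductGeometry.cos_angle, real_inner_smul_left, real_inner_smul_right]
    field_simp
  have hsq : ‖‖x‖⁻¹ • x + ‖y‖⁻¹ • y‖ ^ 2 ≤ 1 := by
    rw [norm_add_sq_real, hux, huy, hcos]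
    linarith [cos_le_neg_half_of_two_pi_div_three_le h (InnerProductGeometry.angle_le_pi x y)]
  nlinarith [norm_nonneg (‖x‖⁻¹ • x + ‖y‖⁻¹ • y)]

theorem dist_add_dist_le_of_two_pi_div_three_le_angle {P : Type*} [MetricSpace P]
    [NormedAddTorsor V P] {A B C : P} (h : 2 * π / 3 ≤ ∠ A C B) (X : P) :
    dist A C + dist B C ≤ dist A X + dist B X + dist C X := by
  have key := norm_add_norm_le_of_inner_eq_norm (p := X -ᵥ C)
    (norm_inv_norm_smul_le_one (A -ᵥ C)) (norm_inv_norm_smul_le_one (B -ᵥ C))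
    (norm_inv_norm_smul_add_le_one h) (real_inner_inv_norm_smul_self (A -ᵥ C))
    (real_inner_inv_norm_smul_self (B -ᵥ C))
  rw [dist_comm C X]
  simpa only [vsub_sub_vsub_cancel_right, dist_eq_norm_vsub V] using key

theorem stmt13_steiner_obtuse (A B C : EuclideanSpace ℝ (Fin 2))
    (hC : 2 * π / 3 ≤ ∠ A C B) :
    ∀ P : EuclideanSpace ℝ (Fin 2),
      dist A C + dist B C ≤ dist A P + dist B P + dist C P :=
  dist_add_dist_le_of_two_pi_div_three_le_angle hC
end
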